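/- Let (Ω, 𝓕, P) be a probability space, K ≥ 1, and let Z : Ω → Fin K, X, Y, Y₀, Y₁ : Ω → Bool be measurable and satisfy consistency. Fix z : Fin K with P(Z = z) > 0, and let X_z : Ω → Bool be measurable with: for P-a.e. ω with Z ω = z, X ω = X_z ω. If the pair ⟨X_z, Y₀⟩ is independent of Z and the pair ⟨X_z, Y₁⟩ is independent of Z (IndepFun), then for all y, ỹ : Bool: P(Y₀ = y ∧ Y₁ = ỹ) ≤ P[{X = false} ∩ {Y = y} | {Z = z}] + P[{X = true} ∩ {Y = ỹ} | {Z = z}]. -/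
import Mathlib


open MeasureTheory ProbabilityTheory

lemma iv_aux_M3
    {Ω : Type*} [MeasurableSpace Ω] (P : Measure Ω) [IsProbabilityMeasure P]
    {K : ℕ} (Z : Ω → Fin K) (X Y W Xz : Ω → Bool)
    (hZ : Measurable Z)
    (z : Fin K) (hz : P {ω | Z ω = z} ≠ 0)
    (b v : Bool)
    (hind : IndepFun (fun ω => (Xz ω, W ω)) Z P)
    (hiff : ∀ᵐ ω ∂P, Z ω = z → ((Xz ω = b ∧ W ω = v) ↔ (X ω = b ∧ Y ω = v))) :
    P {ω | Xz ω = b ∧ W ω = v}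
      = P[{ω | X ω = b} ∩ {ω | Y ω = v} | {ω | Z ω = z}] := by
  have hSz : MeasurableSet {ω | Z ω = z} := hZ (measurableSet_singleton z)
  have hmul : P ({ω | Xz ω = b ∧ W ω = v} ∩ {ω | Z ω = z})
      = P {ω | Xz ω = b ∧ W ω = v} * P {ω | Z ω = z} := by
    have h := hind.measure_inter_preimage_eq_mul {(b, v)} {z}
      (measurableSet_singleton _) (measurableSet_singleton _)
    simpa [Set.preimage, Prod.ext_iff, Set.inter_def] using h
  have hae : P ({ω | Z ω = z} ∩ ({ω | X ω = b} ∩ {ω | Y ω = v}))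
      = P ({ω | Xz ω = b ∧ W ω = v} ∩ {ω | Z ω = z}) := by
    apply measure_congr
    rw [Filter.eventuallyEq_set]
    filter_upwards [hiff] with ω h
    simp only [Set.mem_inter_iff, Set.mem_setOf_eq]
    constructor
    · rintro ⟨hzz, hx, hy⟩
      exact ⟨(h hzz).2 ⟨hx, hy⟩, hzz⟩
    · rintro ⟨hb, hzz⟩
      exact ⟨hzz, (h hzz).1 hb⟩
  rw [cond_apply hSz, hae, hmul, mul_comm,
    mul_assoc, ENNReal.mul_inv_cancel hz (measure_ne_top P _), mul_one]

/-- Step (1) of the proof of Theorem 1: under IV assumption (iii)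
(`(X(z), Y(x_i)) ⫫ Z` for each `i`), the joint inequality (joint) holds:
`P(Y₀ = y, Y₁ = y') ≤ P(X = 0, Y = y | Z = z) + P(X = 1, Y = y' | Z = z)`. -/
theorem iv_joint_bound_M3
    {Ω : Type*} [MeasurableSpace Ω] (P : Measure Ω) [IsProbabilityMeasure P]
    {K : ℕ} (hK : 1 ≤ K)
    (Z : Ω → Fin K) (X Y Y₀ Y₁ : Ω → Bool)
    (hZ : Measurable Z) (hX : Measurable X) (hY : Measurable Y)
    (hY₀ : Measurable Y₀) (hY₁ : Measurable Y₁)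
    (hcons : ∀ᵐ ω ∂P, Y ω = if X ω then Y₁ ω else Y₀ ω)
    (z : Fin K) (hz : 0 < P {ω | Z ω = z})
    (Xz : Ω → Bool) (hXz : Measurable Xz)
    (hXcons : ∀ᵐ ω ∂P, Z ω = z → X ω = Xz ω)
    (hind0 : IndepFun (fun ω => (Xz ω, Y₀ ω)) Z P)
    (hind1 : IndepFun (fun ω => (Xz ω, Y₁ ω)) Z P) :
    ∀ y y' : Bool,
      P {ω | Y₀ ω = y ∧ Y₁ ω = y'}
        ≤ P[{ω | X ω = false} ∩ {ω | Y ω = y} | {ω | Z ω = z}]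
          + P[{ω | X ω = true} ∩ {ω | Y ω = y'} | {ω | Z ω = z}] := by
  intro y y'
  have hzne : P {ω | Z ω = z} ≠ 0 := hz.ne'
  have h0 : P {ω | Xz ω = false ∧ Y₀ ω = y}
      = P[{ω | X ω = false} ∩ {ω | Y ω = y} | {ω | Z ω = z}] := by
    apply iv_aux_M3 P Z X Y Y₀ Xz hZ z hzne false y hind0
    filter_upwards [hcons, hXcons] with ω hc hxc hzz
    have hx := hxc hzz
    constructor
    · rintro ⟨hxb, hy⟩
      refine ⟨hx.trans hxb, ?_⟩
      rw [hc, hx, hxb]; exact hy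
    · rintro ⟨hxb, hy⟩
      refine ⟨hx ▸ hxb, ?_⟩
      rw [hc, hxb] at hy; exact hy
  have h1 : P {ω | Xz ω = true ∧ Y₁ ω = y'}
      = P[{ω | X ω = true} ∩ {ω | Y ω = y'} | {ω | Z ω = z}] := by
    apply iv_aux_M3 P Z X Y Y₁ Xz hZ z hzne true y' hind1
    filter_upwards [hcons, hXcons] with ω hc hxc hzz
    have hx := hxc hzz
    constructor
    · rintro ⟨hxb, hy⟩
      refine ⟨hx.trans hxb, ?_⟩
      rw [hc, hx, hxb]; exact hy
    · rintro ⟨hxb, hy⟩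
      refine ⟨hx ▸ hxb, ?_⟩
      rw [hc, hxb] at hy; exact hy
  have hsub : {ω | Y₀ ω = y ∧ Y₁ ω = y'}
      ⊆ {ω | Xz ω = false ∧ Y₀ ω = y} ∪ {ω | Xz ω = true ∧ Y₁ ω = y'} := by
    rintro ω ⟨hy0, hy1⟩
    cases hx : Xz ω
    · exact Or.inl ⟨hx, hy0⟩
    · exact Or.inr ⟨hx, hy1⟩
  calc P {ω | Y₀ ω = y ∧ Y₁ ω = y'}
      ≤ P ({ω | Xz ω = false ∧ Y₀ ω = y} ∪ {ω | Xz ω = true ∧ Y₁ ω = y'}) :=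
        measure_mono hsub
    _ ≤ P {ω | Xz ω = false ∧ Y₀ ω = y} + P {ω | Xz ω = true ∧ Y₁ ω = y'} :=
        measure_union_le _ _
    _ = _ := by rw [h0, h1]
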